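/- (Convexity step in the stability estimate.) Let 0 < k and λ > 0, and let f_0(x,v) = ((E_0 - E(x,v))/λ)_+^k where E(x,v) = |v|²/2 + U_e(x) for some measurable potential U_e. Then for any nonnegative f with ∫∫ f = ∫∫ f_0 and ∫∫ f^{1+1/k} = ∫∫ f_0^{1+1/k}, the quantity d(f,f_0) := ∫∫ E(x,v)(f - f_0) dv dx satisfies d(f,f_0) ≥ ∫∫ [(E - E_0) + λ f_0^{1/k}] (f - f_0) dv dx ≥ 0, and d(f,f_0) = 0 implies f = f_0 almost everywhere. -/

import Mathlib

/-!
With `m := λ f₀^{1/k} = (E₀ - E)₊`, mass conservation gives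
`d(f,f₀) = ∫ ((E - E₀) + m)(f - f₀) - ∫ m (f - f₀)`. The first integrand is `(E - E₀)₊ f ≥ 0`.
For the second, the tangent line of the strictly convex `ζ ↦ ζ^{1+1/k}` at `f₀` gives
`m (f - f₀) ≤ λ (f^{1+1/k} - f₀^{1+1/k}) / (1 + 1/k)` pointwise, and the right side integrates to
zero by the Casimir constraint. Hence `∫ m (f - f₀) ≤ 0`, and equality forces equality in the
tangent inequality almost everywhere, i.e. `f = f₀` a.e.
-/

open MeasureTheory
noncomputable section

abbrev E3 := EuclideanSpace ℝ (Fin 3)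

/-- The particle energy `E(x,v) = |v|²/2 + U_e(x)`. -/
def particleEnergy (Ue : E3 → ℝ) (p : E3 × E3) : ℝ := ‖p.2‖^2 / 2 + Ue p.1

lemma StrictConvexOn.mul_sub_lt_sub_of_hasDerivAt {S : Set ℝ} {φ : ℝ → ℝ} {φ' a b : ℝ}
    (hφ : StrictConvexOn ℝ S φ) (ha : a ∈ S) (hb : b ∈ S) (hab : a ≠ b)
    (hφ' : HasDerivAt φ φ' b) :
    φ' * (a - b) < φ a - φ b := by
  rcases hab.lt_or_gt with h | h
  · have := hφ.slope_lt_of_hasDerivAt ha hb h hφ'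
    rw [slope_def_field, div_lt_iff₀ (sub_pos.2 h)] at this
    linarith
  · have := hφ.lt_slope_of_hasDerivAt hb ha h hφ'
    rw [slope_def_field, lt_div_iff₀ (sub_pos.2 h)] at this
    linarith

namespace Real

lemma rpow_mul_sub_lt_div_one_add {r a b : ℝ} (hr : 0 < r) (ha : 0 ≤ a) (hb : 0 ≤ b)
    (hab : a ≠ b) :
    b ^ r * (a - b) < (a ^ (1 + r) - b ^ (1 + r)) / (1 + r) := by
  have hderiv := hasDerivAt_rpow_const (x := b) (p := 1 + r) (Or.inr (by linarith))
  rw [add_sub_cancel_left] at hderiv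
  rw [lt_div_iff₀ (by linarith), mul_comm, ← mul_assoc]
  exact (strictConvexOn_rpow (by linarith)).mul_sub_lt_sub_of_hasDerivAt ha hb hab hderiv

lemma rpow_mul_sub_le_div_one_add {r a b : ℝ} (hr : 0 < r) (ha : 0 ≤ a) (hb : 0 ≤ b) :
    b ^ r * (a - b) ≤ (a ^ (1 + r) - b ^ (1 + r)) / (1 + r) := by
  rcases eq_or_ne a b with rfl | hab
  · simp
  · exact (rpow_mul_sub_lt_div_one_add hr ha hb hab).le

end Real

section Profile

variable {k lam E₀ : ℝ}

lemma max_div_rpow_rpow_one_div (hk : 0 < k) (hl : 0 < lam) (a : ℝ) :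
    (max (a / lam) 0 ^ k) ^ (1 / k) = max a 0 / lam := by
  rw [one_div, Real.rpow_rpow_inv (le_max_right _ _) hk.ne', ← max_div_div_right hl.le,
    zero_div]

/-- On the support of the profile `E - E₀ + λ f₀^{1/k}` vanishes; off it, `f₀ = 0 ≤ E - E₀`. -/
lemma energy_gap_mul_sub_nonneg (hk : 0 < k) (hl : 0 < lam) {e y : ℝ} (hy : 0 ≤ y) :
    0 ≤ ((e - E₀) + lam * (max ((E₀ - e) / lam) 0 ^ k) ^ (1 / k)) *
      (y - max ((E₀ - e) / lam) 0 ^ k) := by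
  rw [max_div_rpow_rpow_one_div hk hl, mul_div_cancel₀ _ hl.ne']
  rcases le_total (E₀ - e) 0 with h | h
  · rw [max_eq_right h, max_eq_right (div_nonpos_of_nonpos_of_nonneg h hl.le),
      Real.zero_rpow hk.ne']
    nlinarith
  · rw [max_eq_left h]
    simp

end Profile

section Casimir

variable {α : Type*} [MeasurableSpace α] {μ : Measure α} {f f₀ : α → ℝ} {r : ℝ}

lemma MeasureTheory.Integrable.rpow_mul_sub (hr : 0 < r) (hf₀ : ∀ p, 0 ≤ f₀ p)
    (hmul : Integrable (fun p => f₀ p ^ r * f p) μ)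
    (hpow : Integrable (fun p => f₀ p ^ (1 + r)) μ) :
    Integrable (fun p => f₀ p ^ r * (f p - f₀ p)) μ := by
  refine (hmul.sub hpow).congr (Filter.Eventually.of_forall fun p => ?_)
  rw [Pi.sub_apply, add_comm, Real.rpow_add' (hf₀ p) (by linarith), Real.rpow_one]
  ring

lemma integral_rpow_mul_sub_nonpos (hr : 0 < r) (hf : ∀ p, 0 ≤ f p) (hf₀ : ∀ p, 0 ≤ f₀ p)
    (hT : Integrable (fun p => f₀ p ^ r * (f p - f₀ p)) μ)
    (hfp : Integrable (fun p => f p ^ (1 + r)) μ) (hf₀p : Integrable (fun p => f₀ p ^ (1 + r)) μ)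
    (hcas : ∫ p, f p ^ (1 + r) ∂μ = ∫ p, f₀ p ^ (1 + r) ∂μ) :
    ∫ p, f₀ p ^ r * (f p - f₀ p) ∂μ ≤ 0 := by
  calc ∫ p, f₀ p ^ r * (f p - f₀ p) ∂μ
      ≤ ∫ p, (f p ^ (1 + r) - f₀ p ^ (1 + r)) / (1 + r) ∂μ :=
        integral_mono hT ((hfp.sub hf₀p).div_const _)
          fun p => Real.rpow_mul_sub_le_div_one_add hr (hf p) (hf₀ p)
    _ = 0 := by rw [integral_div, integral_sub hfp hf₀p, hcas, sub_self, zero_div]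

lemma ae_eq_of_integral_rpow_mul_sub_eq_zero (hr : 0 < r) (hf : ∀ p, 0 ≤ f p)
    (hf₀ : ∀ p, 0 ≤ f₀ p) (hT : Integrable (fun p => f₀ p ^ r * (f p - f₀ p)) μ)
    (hfp : Integrable (fun p => f p ^ (1 + r)) μ) (hf₀p : Integrable (fun p => f₀ p ^ (1 + r)) μ)
    (hcas : ∫ p, f p ^ (1 + r) ∂μ = ∫ p, f₀ p ^ (1 + r) ∂μ)
    (h0 : ∫ p, f₀ p ^ r * (f p - f₀ p) ∂μ = 0) :
    f =ᵐ[μ] f₀ := by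
  have hC : ∫ p, (f p ^ (1 + r) - f₀ p ^ (1 + r)) / (1 + r) ∂μ = 0 := by
    rw [integral_div, integral_sub hfp hf₀p, hcas, sub_self, zero_div]
  have htangent_ae := (integral_eq_iff_of_ae_le hT ((hfp.sub hf₀p).div_const _)
    (Filter.Eventually.of_forall fun p => Real.rpow_mul_sub_le_div_one_add hr (hf p) (hf₀ p))).1
    (h0.trans hC.symm)
  filter_upwards [htangent_ae] with p hp
  by_contra hne
  exact (Real.rpow_mul_sub_lt_div_one_add hr (hf p) (hf₀ p) hne).ne hp

end Casimir

section Energy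

variable {α : Type*} [MeasurableSpace α] {μ : Measure α} {E : α → ℝ} {E₀ : ℝ} {f f₀ : α → ℝ}

lemma integrable_rpow_one_div_mul_of_profile {k lam : ℝ} (hk : 0 < k) (hl : 0 < lam)
    (hf₀ : ∀ p, f₀ p = max ((E₀ - E p) / lam) 0 ^ k) (hf : ∀ p, 0 ≤ f p)
    (hfi : Integrable f μ) (hf₀i : Integrable f₀ μ) (hEf : Integrable (fun p => E p * f p) μ) :
    Integrable (fun p => f₀ p ^ (1 / k) * f p) μ := by
  refine Integrable.mono' (((hfi.const_mul E₀).sub hEf).norm.div_const lam)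
    ((hf₀i.aemeasurable.pow_const _).mul hfi.aemeasurable).aestronglyMeasurable
    (Filter.Eventually.of_forall fun p => ?_)
  have hmax : max (E₀ - E p) 0 ≤ |E₀ - E p| := max_le (le_abs_self _) (abs_nonneg _)
  simp only [Real.norm_eq_abs, Pi.sub_apply]
  rw [hf₀ p, max_div_rpow_rpow_one_div hk hl, ← sub_mul,
    abs_mul, abs_mul, abs_of_nonneg (hf p), abs_of_nonneg (by positivity), div_mul_eq_mul_div]
  gcongr
  exact hf p

lemma integral_energy_gap_add_mul_sub (g : α → ℝ) (hfi : Integrable f μ)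
    (hf₀i : Integrable f₀ μ) (hEf : Integrable (fun p => E p * f p) μ)
    (hEf₀ : Integrable (fun p => E p * f₀ p) μ) (hg : Integrable (fun p => g p * (f p - f₀ p)) μ)
    (hmass : ∫ p, f p ∂μ = ∫ p, f₀ p ∂μ) :
    ∫ p, ((E p - E₀) + g p) * (f p - f₀ p) ∂μ =
      ∫ p, E p * (f p - f₀ p) ∂μ + ∫ p, g p * (f p - f₀ p) ∂μ := by
  have hE : Integrable (fun p => E p * (f p - f₀ p)) μ :=
    (hEf.sub hEf₀).congr (Filter.Eventually.of_forall fun p => (mul_sub _ _ _).symm)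
  have hexpand : ∀ p, ((E p - E₀) + g p) * (f p - f₀ p) =
      E p * (f p - f₀ p) + g p * (f p - f₀ p) - E₀ * (f p - f₀ p) := fun p => by ring
  have hsum : Integrable (fun p => E p * (f p - f₀ p) + g p * (f p - f₀ p)) μ := hE.add hg
  have hE₀ : Integrable (fun p => E₀ * (f p - f₀ p)) μ := (hfi.sub hf₀i).const_mul E₀
  simp_rw [hexpand]
  rw [integral_sub hsum hE₀, integral_add hE hg,
    integral_const_mul, integral_sub hfi hf₀i, hmass, sub_self, mul_zero, sub_zero]

end Energy

theorem statement18_general (k lam E₀ : ℝ) (hk : 0 < k) (hl : 0 < lam)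
    (Ue : E3 → ℝ)
    (f f₀ : E3 × E3 → ℝ) (hf0 : ∀ p, 0 ≤ f p)
    (hf₀def : ∀ p, f₀ p = (max ((E₀ - particleEnergy Ue p) / lam) 0) ^ k)
    (hfi : Integrable f) (hf₀i : Integrable f₀)
    (hfp : Integrable (fun p => f p ^ (1 + 1/k)))
    (hf₀p : Integrable (fun p => f₀ p ^ (1 + 1/k)))
    (hEf : Integrable (fun p => particleEnergy Ue p * f p))
    (hEf₀ : Integrable (fun p => particleEnergy Ue p * f₀ p))
    (hmass : (∫ p, f p) = ∫ p, f₀ p)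
    (hcas : (∫ p, f p ^ (1 + 1/k)) = ∫ p, f₀ p ^ (1 + 1/k)) :
    (∫ p, ((particleEnergy Ue p - E₀) + lam * f₀ p ^ (1/k)) * (f p - f₀ p)) ≤
      (∫ p, particleEnergy Ue p * (f p - f₀ p)) ∧
    0 ≤ (∫ p, ((particleEnergy Ue p - E₀) + lam * f₀ p ^ (1/k)) * (f p - f₀ p)) ∧
    ((∫ p, particleEnergy Ue p * (f p - f₀ p)) = 0 → f =ᵐ[volume] f₀) := by
  have hr : 0 < 1 / k := one_div_pos.2 hk
  have hf₀nn : ∀ p, 0 ≤ f₀ p := fun p => by rw [hf₀def p]; positivity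
  have hT : Integrable (fun p => f₀ p ^ (1 / k) * (f p - f₀ p)) :=
    (integrable_rpow_one_div_mul_of_profile hk hl hf₀def hf0 hfi hf₀i hEf).rpow_mul_sub
      hr hf₀nn hf₀p
  have hT_nonpos := integral_rpow_mul_sub_nonpos hr hf0 hf₀nn hT hfp hf₀p hcas
  have hsplit : ∫ p, ((particleEnergy Ue p - E₀) + lam * f₀ p ^ (1 / k)) * (f p - f₀ p) =
      (∫ p, particleEnergy Ue p * (f p - f₀ p)) + lam * ∫ p, f₀ p ^ (1 / k) * (f p - f₀ p) := by
    rw [← integral_const_mul]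
    simp_rw [← mul_assoc]
    exact integral_energy_gap_add_mul_sub (fun p => lam * f₀ p ^ (1 / k)) hfi hf₀i hEf hEf₀
      (by simpa only [mul_assoc] using hT.const_mul lam) hmass
  have hgap_nonneg :
      0 ≤ ∫ p, ((particleEnergy Ue p - E₀) + lam * f₀ p ^ (1 / k)) * (f p - f₀ p) :=
    integral_nonneg fun p => by
      rw [hf₀def p]
      exact energy_gap_mul_sub_nonneg hk hl (hf0 p)
  have hlamT_nonpos : lam * ∫ p, f₀ p ^ (1 / k) * (f p - f₀ p) ≤ 0 :=
    mul_nonpos_of_nonneg_of_nonpos hl.le hT_nonpos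
  refine ⟨by linarith, hgap_nonneg, fun hd => ?_⟩
  refine ae_eq_of_integral_rpow_mul_sub_eq_zero hr hf0 hf₀nn hT hfp hf₀p hcas ?_
  exact le_antisymm hT_nonpos (nonneg_of_mul_nonneg_right (by linarith) hl)

/-- convexity step: if `f₀ = ((E₀-E)/λ)₊^k` and `f ≥ 0` has the same mass and
the same `L^{1+1/k}` Casimir as `f₀`, then
`d(f,f₀) = ∫∫ E (f-f₀) ≥ ∫∫ [(E-E₀)+λ f₀^{1/k}](f-f₀) ≥ 0`, with `d(f,f₀)=0` only if
`f = f₀` a.e. -/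
theorem statement18 (k lam E₀ : ℝ) (hk : 0 < k) (hl : 0 < lam)
    (Ue : E3 → ℝ) (hUe : Measurable Ue)
    (f f₀ : E3 × E3 → ℝ) (hfm : Measurable f) (hf0 : ∀ p, 0 ≤ f p)
    (hf₀def : ∀ p, f₀ p = (max ((E₀ - particleEnergy Ue p) / lam) 0) ^ k)
    (hfi : Integrable f) (hf₀i : Integrable f₀)
    (hfp : Integrable (fun p => f p ^ (1 + 1/k)))
    (hf₀p : Integrable (fun p => f₀ p ^ (1 + 1/k)))
    (hEf : Integrable (fun p => particleEnergy Ue p * f p))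
    (hEf₀ : Integrable (fun p => particleEnergy Ue p * f₀ p))
    (hmass : (∫ p, f p) = ∫ p, f₀ p)
    (hcas : (∫ p, f p ^ (1 + 1/k)) = ∫ p, f₀ p ^ (1 + 1/k)) :
    (∫ p, ((particleEnergy Ue p - E₀) + lam * f₀ p ^ (1/k)) * (f p - f₀ p)) ≤
      (∫ p, particleEnergy Ue p * (f p - f₀ p)) ∧
    0 ≤ (∫ p, ((particleEnergy Ue p - E₀) + lam * f₀ p ^ (1/k)) * (f p - f₀ p)) ∧
    ((∫ p, particleEnergy Ue p * (f p - f₀ p)) = 0 → f =ᵐ[volume] f₀) :=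
  statement18_general k lam E₀ hk hl Ue f f₀ hf0 hf₀def hfi hf₀i hfp hf₀p hEf hEf₀ hmass hcas
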